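/- arXiv:2104.01368 — 2 statements merged into one kernel-verified Lean document; each statement's English description precedes it below -/
import Mathlib

section
/- Assume Y has at least two elements, Y° is nonempty, P(x,Y) := ∑_{w∈Y} P(x,w) > 0 for every x ∈ Y, the Y×Y stochastic matrix P_{[Y]}(x,y) = P(x,y)/P(x,Y) is irreducible, and the ∂Y×∂Y matrix I_{∂Y} + R_{[Y]} is invertible, where R_{[Y]} = (P_{[Y]})_{∂Y,Y°} G_{Y°}² (P_{[Y]})_{Y°,∂Y} with G_{Y°} = (I_{Y°} − P_{Y°})^{-1}. Then for every f ∈ L(Y°), g₁ ∈ L(∂Y) and g₂ ∈ L(∂X) there exists a unique u ∈ L(X) such that Δ_{[Y]}²(u_Y) = f on Y°, ∂*_n u = g₁ on ∂Y, and u = g₂ on ∂X, where Δ_{[Y]} = P_{[Y]} − I_Y and ∂*_n u(y) = (1/P(y,∂X)) ∑_{z∈∂X} P(y,z)(u(z) − u(y)) for y ∈ ∂Y. Its restriction u_Y is the unique solution of the bi-Laplace Dirichlet problem Δ_{[Y]}²(u_Y) = f on Y°, u_Y = g on ∂Y, where g(y) = (1/P(y,∂X)) ∑_{z∈∂X} P(y,z)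 g₂(z) − g₁(y). -/
open Matrix Finset

attribute [local instance] Classical.propDecidable

variable {X : Type*}

/-- The `A × A` submatrix of `P`. -/
def subMatrix (P : Matrix X X ℝ) (A : Finset X) : Matrix A A ℝ :=
  Matrix.of fun x y => P x.1 y.1

/-- The Green kernel `G_A = (I_A − P_A)⁻¹`. -/
noncomputable def green [DecidableEq X] (P : Matrix X X ℝ) (A : Finset X) :
    Matrix A A ℝ :=
  (1 - subMatrix P A)⁻¹

/-- The stochastic matrix `P_{[Y]}(x,y) = P(x,y)/P(x,Y)` of the sub-network
`Y = X°` (with `∂X = Bnd`). -/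
noncomputable def PY [Fintype X] [DecidableEq X] (P : Matrix X X ℝ) (Bnd : Finset X) :
    Matrix ↥Bndᶜ ↥Bndᶜ ℝ :=
  Matrix.of fun x y => P x.1 y.1 / ∑ w ∈ Bndᶜ, P x.1 w

/-- The Laplacian `Δ_{[Y]} = P_{[Y]} − I_Y` acting on complex functions on `Y`. -/
noncomputable def lapY [Fintype X] [DecidableEq X] (P : Matrix X X ℝ) (Bnd : Finset X)
    (w : ↥Bndᶜ → ℂ) (x : ↥Bndᶜ) : ℂ :=
  (∑ z, (PY P Bnd x z : ℂ) * w z) - w x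

/-- The boundary `∂Y = {y ∈ Y : P(y,z) > 0 for some z ∈ ∂X}` of `Y = X°`. -/
noncomputable def bY [Fintype X] [DecidableEq X] (P : Matrix X X ℝ) (Bnd : Finset X) :
    Finset X :=
  Bndᶜ.filter fun y => ∃ z ∈ Bnd, 0 < P y z

/-- The second interior `Y° = Y ∖ ∂Y`. -/
noncomputable def Yint [Fintype X] [DecidableEq X] (P : Matrix X X ℝ) (Bnd : Finset X) :
    Finset X :=
  Bndᶜ \ bY P Bnd

/-- The matrix `R_{[Y]} = (P_{[Y]})_{∂Y,Y°} G_{Y°}² (P_{[Y]})_{Y°,∂Y}`. -/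
noncomputable def RY [Fintype X] [DecidableEq X] (P : Matrix X X ℝ) (Bnd : Finset X) :
    Matrix ↥(bY P Bnd) ↥(bY P Bnd) ℝ :=
  (Matrix.of fun (x : ↥(bY P Bnd)) (y : ↥(Yint P Bnd)) =>
      P x.1 y.1 / ∑ w ∈ Bndᶜ, P x.1 w) *
    (green P (Yint P Bnd)) ^ 2 *
    (Matrix.of fun (y : ↥(Yint P Bnd)) (z : ↥(bY P Bnd)) =>
      P y.1 z.1 / ∑ w ∈ Bndᶜ, P y.1 w)

/-- `u` solves the plate problem (variant 2): `Δ_{[Y]}²(u_Y) = f` on `Y°`,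
`∂*ₙu = g₁` on `∂Y`, `u = g₂` on `∂X`. -/
noncomputable def PlateSolves [Fintype X] [DecidableEq X] (P : Matrix X X ℝ)
    (Bnd : Finset X) (f g₁ g₂ : X → ℂ) (u : X → ℂ) : Prop :=
  (∀ y : ↥(Yint P Bnd),
      lapY P Bnd (lapY P Bnd fun z : ↥Bndᶜ => u z.1)
        ⟨y.1, (Finset.mem_sdiff.mp y.2).1⟩ = f y.1) ∧
  (∀ y ∈ bY P Bnd,
      ((∑ z ∈ Bnd, P y z : ℝ) : ℂ)⁻¹ * ∑ z ∈ Bnd, (P y z : ℂ) * (u z - u y) = g₁ y) ∧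
  (∀ x ∈ Bnd, u x = g₂ x)

/-- `w : Y → ℂ` solves the bi-Laplace Dirichlet problem on the sub-network `Y`:
`Δ_{[Y]}²w = f` on `Y°` and `w = g` on `∂Y`. -/
noncomputable def BiDirSolves [Fintype X] [DecidableEq X] (P : Matrix X X ℝ)
    (Bnd : Finset X) (f : X → ℂ) (g : X → ℂ) (w : ↥Bndᶜ → ℂ) : Prop :=
  (∀ y : ↥(Yint P Bnd),
      lapY P Bnd (lapY P Bnd w) ⟨y.1, (Finset.mem_sdiff.mp y.2).1⟩ = f y.1) ∧
  (∀ y : ↥Bndᶜ, y.1 ∈ bY P Bnd → w y = g y.1)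

/-!
At points of `Y°` the rows of `P_{[Y]}` are those of `P`, and once `u = g₂` on `∂X` the
condition `∂*ₙu = g₁` on `∂Y` is just the Dirichlet condition `u = g`; so the plate problem is
the bi-Laplace Dirichlet problem on `Y`. This is a square linear system, uniquely solvable as
soon as only `0` solves the homogeneous one. For `w` vanishing on `∂Y`,
`(Δ_{[Y]}²w)|_{Y°} = ((I − P_{Y°})² + BC) w|_{Y°}` with `B`, `C` the off-diagonal blocks of
`P_{[Y]}`, and `(I − P_{Y°})² + BC = (I − P_{Y°})² (I + G²BC)`. The first factor is invertible
by the maximum principle (irreducibility of `P_{[Y]}` and `∂Y ≠ ∅`), the second because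
`det (I + G²B · C) = det (I + C · G²B) = det (I + R_{[Y]})`.
-/

section NonnegMatrix

variable {ι κ : Type*} [Fintype ι] [DecidableEq ι]

theorem Matrix.mem_of_pow_apply_pos {Q : Matrix ι ι ℝ} (hQ : ∀ i j, 0 ≤ Q i j) {S : Set ι}
    (hS : ∀ i ∈ S, ∀ j, 0 < Q i j → j ∈ S) {i : ι} (hi : i ∈ S) :
    ∀ (n : ℕ) (j : ι), 0 < (Q ^ n) i j → j ∈ S
  | 0, j, h => by
    rw [pow_zero, one_apply] at h
    split_ifs at h with hij
    · exact hij ▸ hi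
    · exact absurd h (lt_irrefl 0)
  | n + 1, j, h => by
    rw [pow_succ, mul_apply] at h
    obtain ⟨k, -, hk⟩ := (Finset.sum_pos_iff_of_nonneg fun k _ =>
      mul_nonneg (pow_apply_nonneg hQ n i k) (hQ k j)).1 h
    exact hS k (mem_of_pow_apply_pos hQ hS hi n k (pos_of_mul_pos_left hk (hQ k j))) j
      (pos_of_mul_pos_right hk (pow_apply_nonneg hQ n i k))

theorem sum_eq_one_and_eq_of_sum_mul_eq_max [Fintype κ] {q v : κ → ℝ} {m : ℝ}
    (hq : ∀ k, 0 ≤ q k) (hsum : ∑ k, q k ≤ 1) (hmax : ∀ k, v k ≤ m) (hm : 0 < m)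
    (hv : ∑ k, q k * v k = m) :
    ∑ k, q k = 1 ∧ ∀ k, 0 < q k → v k = m := by
  have hgap : ∀ k ∈ univ, 0 ≤ q k * (m - v k) := fun k _ =>
    mul_nonneg (hq k) (sub_nonneg.2 (hmax k))
  have hsplit : (1 - ∑ k, q k) * m + ∑ k, q k * (m - v k) = 0 := by
    simp only [mul_sub, sum_sub_distrib, ← sum_mul, hv]
    ring
  have hdefect : 0 ≤ (1 - ∑ k, q k) * m := mul_nonneg (sub_nonneg.2 hsum) hm.le
  have hgap0 : ∑ k, q k * (m - v k) = 0 := by linarith [sum_nonneg hgap]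
  refine ⟨?_, fun k hk => ?_⟩
  · have hdefect0 : (1 - ∑ k, q k) * m = 0 := by linarith
    linarith [(mul_eq_zero.1 hdefect0).resolve_right hm.ne']
  · have hk0 := (sum_eq_zero_iff_of_nonneg hgap).1 hgap0 k (mem_univ k)
    linarith [(mul_eq_zero.1 hk0).resolve_left hk.ne']

-- Maximum principle: at a positive maximum the row of `Q` is stochastic and supported on
-- maximisers inside `range e`; by irreducibility this would spread to `b ∉ range e`.
theorem Matrix.le_zero_of_submatrix_mulVec_eq_self [Fintype κ] {Q : Matrix ι ι ℝ}
    (hQ : ∀ i j, 0 ≤ Q i j) (hrow : ∀ i, ∑ j, Q i j ≤ 1)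
    (hirr : ∀ i j, ∃ n, 0 < (Q ^ n) i j)
    {e : κ → ι} (he : Function.Injective e) {b : ι} (hb : b ∉ Set.range e) {v : κ → ℝ}
    (hv : Q.submatrix e e *ᵥ v = v) (k : κ) : v k ≤ 0 := by
  by_contra! hk
  have : Nonempty κ := ⟨k⟩
  obtain ⟨k₀, hk₀⟩ := Finite.exists_max v
  have hm : 0 < v k₀ := hk.trans_le (hk₀ k)
  set S : Set ι := {i | ∃ k, e k = i ∧ v k = v k₀}
  have hS : ∀ i ∈ S, ∀ j, 0 < Q i j → j ∈ S := by
    rintro _ ⟨k, rfl, hk⟩ j hj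
    have hrange : ∑ j ∈ univ.map ⟨e, he⟩, Q (e k) j = ∑ k', Q (e k) (e k') :=
      sum_map _ _ _
    have hle : ∑ j ∈ univ.map ⟨e, he⟩, Q (e k) j ≤ 1 :=
      (sum_le_sum_of_subset_of_nonneg (subset_univ _) fun j _ _ => hQ _ j).trans (hrow _)
    obtain ⟨hfull, hmax⟩ := sum_eq_one_and_eq_of_sum_mul_eq_max (fun k' => hQ (e k) (e k'))
      (hrange ▸ hle) hk₀ hm (hk ▸ congrFun hv k)
    by_cases hj' : j ∈ Set.range e
    · obtain ⟨k', rfl⟩ := hj'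
      exact ⟨k', rfl, hmax k' hj⟩
    · have hlt := sum_lt_sum_of_subset (subset_univ (univ.map ⟨e, he⟩)) (mem_univ j)
        (by simpa using hj') hj fun j _ _ => hQ _ j
      linarith [hrow (e k)]
  obtain ⟨n, hn⟩ := hirr (e k₀) b
  obtain ⟨k, hkb, -⟩ := Matrix.mem_of_pow_apply_pos hQ hS ⟨k₀, rfl, rfl⟩ n b hn
  exact hb ⟨k, hkb⟩

theorem Matrix.isUnit_one_sub_submatrix [Fintype κ] [DecidableEq κ] {Q : Matrix ι ι ℝ}
    (hQ : ∀ i j, 0 ≤ Q i j) (hrow : ∀ i, ∑ j, Q i j ≤ 1)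
    (hirr : ∀ i j, ∃ n, 0 < (Q ^ n) i j)
    {e : κ → ι} (he : Function.Injective e) {b : ι} (hb : b ∉ Set.range e) :
    IsUnit (1 - Q.submatrix e e) := by
  rw [← mulVec_injective_iff_isUnit]
  refine (injective_iff_map_eq_zero (1 - Q.submatrix e e).mulVecLin).2 fun v hv => ?_
  have hfix : Q.submatrix e e *ᵥ v = v := by
    rw [mulVecLin_apply, sub_mulVec, one_mulVec, sub_eq_zero] at hv
    exact hv.symm
  have hfix' : Q.submatrix e e *ᵥ -v = -v := by rw [mulVec_neg, hfix]
  funext k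
  have h₁ := le_zero_of_submatrix_mulVec_eq_self hQ hrow hirr he hb hfix k
  have h₂ := le_zero_of_submatrix_mulVec_eq_self hQ hrow hirr he hb hfix' k
  simp only [Pi.neg_apply, Pi.zero_apply] at h₂ ⊢
  linarith

end NonnegMatrix

section SecondInterior

variable [Fintype X] [DecidableEq X]

def inclYint (P : Matrix X X ℝ) (Bnd : Finset X) (y : ↥(Yint P Bnd)) : ↥Bndᶜ :=
  ⟨y.1, (mem_sdiff.1 y.2).1⟩

def inclbY (P : Matrix X X ℝ) (Bnd : Finset X) (b : ↥(bY P Bnd)) : ↥Bndᶜ :=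
  ⟨b.1, (mem_filter.1 b.2).1⟩

variable {P : Matrix X X ℝ} {Bnd : Finset X}

@[simp]
theorem coe_inclYint (y : ↥(Yint P Bnd)) : (inclYint P Bnd y : X) = y := rfl

@[simp]
theorem coe_inclbY (b : ↥(bY P Bnd)) : (inclbY P Bnd b : X) = b := rfl

theorem inclYint_injective : Function.Injective (inclYint P Bnd) :=
  fun _ _ h => Subtype.ext (Subtype.mk.inj h)

theorem inclbY_injective : Function.Injective (inclbY P Bnd) :=
  fun _ _ h => Subtype.ext (Subtype.mk.inj h)

theorem inclYint_ne_inclbY (y : ↥(Yint P Bnd)) (b : ↥(bY P Bnd)) :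
    inclYint P Bnd y ≠ inclbY P Bnd b :=
  fun h => (mem_sdiff.1 y.2).2 (congrArg Subtype.val h ▸ b.2)

noncomputable def sumYintBYEquiv (P : Matrix X X ℝ) (Bnd : Finset X) :
    ↥(Yint P Bnd) ⊕ ↥(bY P Bnd) ≃ ↥Bndᶜ :=
  Equiv.ofBijective (Sum.elim (inclYint P Bnd) (inclbY P Bnd))
    ⟨inclYint_injective.sumElim inclbY_injective inclYint_ne_inclbY, fun z => by
      by_cases hz : z.1 ∈ bY P Bnd
      · exact ⟨Sum.inr ⟨z.1, hz⟩, rfl⟩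
      · exact ⟨Sum.inl ⟨z.1, mem_sdiff.2 ⟨z.2, hz⟩⟩, rfl⟩⟩

theorem sum_compl_eq_sum_Yint_add_sum_bY {M : Type*} [AddCommMonoid M] (F : ↥Bndᶜ → M) :
    ∑ z, F z = ∑ y, F (inclYint P Bnd y) + ∑ b, F (inclbY P Bnd b) :=
  (Fintype.sum_equiv (sumYintBYEquiv P Bnd) _ _ fun _ => rfl).symm.trans
    (Fintype.sum_sum_type _)

theorem funext_inclYint_inclbY {α : Type*} {w w' : ↥Bndᶜ → α}
    (hint : w ∘ inclYint P Bnd = w' ∘ inclYint P Bnd)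
    (hbd : w ∘ inclbY P Bnd = w' ∘ inclbY P Bnd) : w = w' := by
  funext z
  obtain ⟨y | b, rfl⟩ := (sumYintBYEquiv P Bnd).surjective z
  · exact congrFun hint y
  · exact congrFun hbd b

theorem P_eq_zero_of_mem_Yint (hnonneg : ∀ x y, 0 ≤ P x y) {y z : X} (hy : y ∈ Yint P Bnd)
    (hz : z ∈ Bnd) : P y z = 0 :=
  ((hnonneg y z).eq_of_not_lt fun hpos =>
    (mem_sdiff.1 hy).2 (mem_filter.2 ⟨(mem_sdiff.1 hy).1, z, hz, hpos⟩)).symm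

theorem sum_compl_eq_one_of_mem_Yint (hnonneg : ∀ x y, 0 ≤ P x y)
    (hrow : ∀ x, ∑ y, P x y = 1) {y : X} (hy : y ∈ Yint P Bnd) :
    ∑ w ∈ Bndᶜ, P y w = 1 := by
  rw [← hrow y, ← sum_add_sum_compl Bnd,
    sum_eq_zero fun z hz => P_eq_zero_of_mem_Yint hnonneg hy hz, zero_add]

theorem PY_submatrix_inclYint (hnonneg : ∀ x y, 0 ≤ P x y) (hrow : ∀ x, ∑ y, P x y = 1) :
    (PY P Bnd).submatrix (inclYint P Bnd) (inclYint P Bnd) = subMatrix P (Yint P Bnd) := by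
  ext y z
  simp [PY, subMatrix, inclYint, sum_compl_eq_one_of_mem_Yint hnonneg hrow y.2]

theorem PY_nonneg (hnonneg : ∀ x y, 0 ≤ P x y) (x y : ↥Bndᶜ) : 0 ≤ PY P Bnd x y :=
  div_nonneg (hnonneg _ _) (sum_nonneg fun _ _ => hnonneg _ _)

theorem sum_PY_le_one (x : ↥Bndᶜ) : ∑ y, PY P Bnd x y ≤ 1 := by
  simp only [PY, of_apply]
  rw [← sum_div, sum_coe_sort Bndᶜ (P x.1)]
  exact div_self_le_one _

theorem bY_nonempty (hnonneg : ∀ x y, 0 ≤ P x y)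
    (hirr : ∀ x y, ∃ n, 1 ≤ n ∧ 0 < (P ^ n) x y)
    (hB : Bnd.Nonempty) (hB' : Bnd ≠ univ) : (bY P Bnd).Nonempty := by
  by_contra hempty
  have hclosed : ∀ x ∈ {x | x ∉ Bnd}, ∀ z, 0 < P x z → z ∈ {x | x ∉ Bnd} :=
    fun x hx z hxz hz => hempty ⟨x, mem_filter.2 ⟨mem_compl.2 hx, z, hz, hxz⟩⟩
  obtain ⟨a, ha⟩ : ∃ a, a ∉ Bnd := by simpa [eq_univ_iff_forall] using hB'
  obtain ⟨b, hb⟩ := hB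
  obtain ⟨n, -, hn⟩ := hirr a b
  exact mem_of_pow_apply_pos hnonneg hclosed ha n b hn hb

theorem isUnit_one_sub_subMatrix_Yint (hnonneg : ∀ x y, 0 ≤ P x y)
    (hrow : ∀ x, ∑ y, P x y = 1) (hbY : (bY P Bnd).Nonempty)
    (hirrY : ∀ x y : ↥Bndᶜ, ∃ n, 1 ≤ n ∧ 0 < ((PY P Bnd) ^ n) x y) :
    IsUnit (1 - subMatrix P (Yint P Bnd)) := by
  obtain ⟨b, hb⟩ := hbY
  rw [← PY_submatrix_inclYint hnonneg hrow]
  exact isUnit_one_sub_submatrix (PY_nonneg hnonneg) sum_PY_le_one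
    (fun x y => (hirrY x y).imp fun _ => And.right) inclYint_injective
    (b := inclbY P Bnd ⟨b, hb⟩) fun ⟨y, hy⟩ => inclYint_ne_inclbY y _ hy

end SecondInterior

section BiLaplacian

variable [Fintype X] [DecidableEq X] {P : Matrix X X ℝ} {Bnd : Finset X}

noncomputable def biLapBlock (P : Matrix X X ℝ) (Bnd : Finset X) :
    Matrix ↥(Yint P Bnd) ↥(Yint P Bnd) ℝ :=
  (1 - subMatrix P (Yint P Bnd)) ^ 2 +
    (PY P Bnd).submatrix (inclYint P Bnd) (inclbY P Bnd) *
      (PY P Bnd).submatrix (inclbY P Bnd) (inclYint P Bnd)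

theorem isUnit_biLapBlock (hA : IsUnit (1 - subMatrix P (Yint P Bnd)))
    (hR : IsUnit (1 + RY P Bnd)) : IsUnit (biLapBlock P Bnd) := by
  set N := 1 - subMatrix P (Yint P Bnd)
  set G := green P (Yint P Bnd)
  set B := (PY P Bnd).submatrix (inclYint P Bnd) (inclbY P Bnd)
  set C := (PY P Bnd).submatrix (inclbY P Bnd) (inclYint P Bnd)
  have hNG : N ^ 2 * G ^ 2 = 1 := by
    have hNG1 : N * G = 1 := mul_nonsing_inv N ((isUnit_iff_isUnit_det N).1 hA)
    rw [sq, sq, mul_assoc, ← mul_assoc N G G, hNG1, one_mul, hNG1]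
  have hfactor : biLapBlock P Bnd = N ^ 2 * (1 + G ^ 2 * B * C) := by
    rw [mul_add, mul_one, ← Matrix.mul_assoc, ← Matrix.mul_assoc, hNG, Matrix.one_mul]
    rfl
  have hRY : RY P Bnd = C * (G ^ 2 * B) := Matrix.mul_assoc _ _ _
  rw [hfactor]
  refine (hA.pow 2).mul ?_
  rw [isUnit_iff_isUnit_det, det_one_add_mul_comm, ← hRY, ← isUnit_iff_isUnit_det]
  exact hR

theorem lapY_eq_mulVec (w : ↥Bndᶜ → ℂ) :
    lapY P Bnd w = (PY P Bnd).map Complex.ofRealHom *ᵥ w - w :=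
  rfl

theorem mulVec_comp_eq_add {R α : Type*} [NonUnitalNonAssocSemiring R] (P : Matrix X X ℝ)
    (N : Matrix ↥Bndᶜ ↥Bndᶜ R) (r : α → ↥Bndᶜ) (w : ↥Bndᶜ → R) :
    (N *ᵥ w) ∘ r = N.submatrix r (inclYint P Bnd) *ᵥ (w ∘ inclYint P Bnd) +
      N.submatrix r (inclbY P Bnd) *ᵥ (w ∘ inclbY P Bnd) := by
  funext a
  exact sum_compl_eq_sum_Yint_add_sum_bY _

theorem lapY_lapY_comp_inclYint (hnonneg : ∀ x y, 0 ≤ P x y) (hrow : ∀ x, ∑ y, P x y = 1)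
    {w : ↥Bndᶜ → ℂ} (hw : w ∘ inclbY P Bnd = 0) :
    lapY P Bnd (lapY P Bnd w) ∘ inclYint P Bnd =
      (biLapBlock P Bnd).map Complex.ofRealHom *ᵥ (w ∘ inclYint P Bnd) := by
  set x := w ∘ inclYint P Bnd
  have hPYint : ((PY P Bnd).map Complex.ofRealHom).submatrix (inclYint P Bnd) (inclYint P Bnd) =
      (subMatrix P (Yint P Bnd)).map Complex.ofRealHom := by
    rw [submatrix_map, PY_submatrix_inclYint hnonneg hrow]
  have hint : lapY P Bnd w ∘ inclYint P Bnd =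
      (subMatrix P (Yint P Bnd)).map Complex.ofRealHom *ᵥ x - x := by
    rw [lapY_eq_mulVec, Pi.sub_comp, mulVec_comp_eq_add P, hw, mulVec_zero, add_zero, hPYint]
  have hbd : lapY P Bnd w ∘ inclbY P Bnd =
      ((PY P Bnd).submatrix (inclbY P Bnd) (inclYint P Bnd)).map Complex.ofRealHom *ᵥ x := by
    rw [lapY_eq_mulVec, Pi.sub_comp, mulVec_comp_eq_add P, hw, mulVec_zero, add_zero, sub_zero,
      submatrix_map]
  rw [lapY_eq_mulVec, Pi.sub_comp, mulVec_comp_eq_add P, hint, hbd, hPYint, submatrix_map,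
    biLapBlock, Matrix.map_add _ (map_add _), Matrix.map_mul, Matrix.map_pow,
    Matrix.map_sub _ (map_sub _), Matrix.map_one _ (map_zero _) (map_one _), add_mulVec,
    ← mulVec_mulVec, sq, ← mulVec_mulVec]
  simp only [sub_mulVec, one_mulVec, mulVec_sub]
  abel

end BiLaplacian

section BiDirichlet

variable [Fintype X] [DecidableEq X] {P : Matrix X X ℝ} {Bnd : Finset X}

noncomputable def biDirMatrix (P : Matrix X X ℝ) (Bnd : Finset X) :
    Matrix ↥Bndᶜ ↥Bndᶜ ℂ :=
  of fun y : ↥Bndᶜ => if y.1 ∈ bY P Bnd then (1 : Matrix ↥Bndᶜ ↥Bndᶜ ℂ) y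
    else (((PY P Bnd).map Complex.ofRealHom - 1) ^ 2 : Matrix ↥Bndᶜ ↥Bndᶜ ℂ) y

theorem biDirMatrix_mulVec (w : ↥Bndᶜ → ℂ) :
    biDirMatrix P Bnd *ᵥ w =
      fun y : ↥Bndᶜ => if y.1 ∈ bY P Bnd then w y else lapY P Bnd (lapY P Bnd w) y := by
  have hlap : lapY P Bnd (lapY P Bnd w) =
      ((PY P Bnd).map Complex.ofRealHom - 1) ^ 2 *ᵥ w := by
    rw [lapY_eq_mulVec, lapY_eq_mulVec, sq, ← mulVec_mulVec, sub_mulVec, one_mulVec, sub_mulVec,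
      one_mulVec]
  funext y
  rw [hlap]
  by_cases hy : y.1 ∈ bY P Bnd
  · simp [biDirMatrix, mulVec, hy, dotProduct, one_apply]
  · simp [biDirMatrix, mulVec, hy]

theorem biDirSolves_iff {f g : X → ℂ} {w : ↥Bndᶜ → ℂ} :
    BiDirSolves P Bnd f g w ↔
      biDirMatrix P Bnd *ᵥ w = fun y : ↥Bndᶜ => if y.1 ∈ bY P Bnd then g y else f y := by
  rw [BiDirSolves, biDirMatrix_mulVec, funext_iff]
  constructor
  · rintro ⟨hint, hbd⟩ y
    by_cases hy : y.1 ∈ bY P Bnd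
    · simp only [if_pos hy, hbd y hy]
    · simp only [if_neg hy]
      exact hint ⟨y.1, mem_sdiff.2 ⟨y.2, hy⟩⟩
  · intro h
    refine ⟨fun y => ?_, fun y hy => by simpa [if_pos hy] using h y⟩
    have hy := h (inclYint P Bnd y)
    simp only [coe_inclYint, (mem_sdiff.1 y.2).2, if_false] at hy
    exact hy

theorem eq_zero_of_biDirMatrix_mulVec_eq_zero (hnonneg : ∀ x y, 0 ≤ P x y)
    (hrow : ∀ x, ∑ y, P x y = 1) (hM : IsUnit (biLapBlock P Bnd)) {w : ↥Bndᶜ → ℂ}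
    (hw : biDirMatrix P Bnd *ᵥ w = 0) : w = 0 := by
  rw [biDirMatrix_mulVec, funext_iff] at hw
  have hbd : w ∘ inclbY P Bnd = 0 := funext fun b => by
    simpa [if_pos b.2] using hw (inclbY P Bnd b)
  have hint : w ∘ inclYint P Bnd = 0 := by
    have hMℂ : IsUnit ((biLapBlock P Bnd).map Complex.ofRealHom) :=
      hM.map Complex.ofRealHom.mapMatrix
    apply mulVec_injective_iff_isUnit.2 hMℂ
    rw [← lapY_lapY_comp_inclYint hnonneg hrow hbd, mulVec_zero]
    funext y
    simpa [(mem_sdiff.1 y.2).2] using hw (inclYint P Bnd y)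
  exact funext_inclYint_inclbY hint hbd

theorem existsUnique_biDirSolves (hnonneg : ∀ x y, 0 ≤ P x y) (hrow : ∀ x, ∑ y, P x y = 1)
    (hM : IsUnit (biLapBlock P Bnd)) (f g : X → ℂ) : ∃! w, BiDirSolves P Bnd f g w := by
  have hinj : Function.Injective (biDirMatrix P Bnd *ᵥ ·) :=
    (injective_iff_map_eq_zero (biDirMatrix P Bnd).mulVecLin).2 fun _ =>
      eq_zero_of_biDirMatrix_mulVec_eq_zero hnonneg hrow hM
  obtain ⟨w, hw⟩ := mulVec_surjective_iff_isUnit.2 (mulVec_injective_iff_isUnit.1 hinj)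
    fun y : ↥Bndᶜ => if y.1 ∈ bY P Bnd then g y else f y
  exact ⟨w, biDirSolves_iff.2 hw, fun w' hw' => hinj ((biDirSolves_iff.1 hw').trans hw.symm)⟩

end BiDirichlet

theorem existsUnique_extend_compl {α β : Type*} [Fintype α] [DecidableEq α] {s : Finset α}
    (h : α → β) {R : (↥sᶜ → β) → Prop} (hR : ∃! w, R w) :
    ∃! u : α → β, (∀ x ∈ s, u x = h x) ∧ R fun z => u z := by
  obtain ⟨w, hw, huniq⟩ := hR
  let u₀ : α → β := fun x => if hx : x ∈ sᶜ then w ⟨x, hx⟩ else h x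
  have hrestrict : (fun z : ↥sᶜ => u₀ z) = w := funext fun z => dif_pos z.2
  refine ⟨u₀, ⟨fun x hx => dif_neg (notMem_compl.2 hx), hrestrict ▸ hw⟩, ?_⟩
  rintro u ⟨hs, hu⟩
  funext x
  by_cases hx : x ∈ sᶜ
  · exact congrFun ((huniq _ hu).trans hrestrict.symm) ⟨x, hx⟩
  · exact (hs x (notMem_compl.1 hx)).trans (dif_neg hx : u₀ x = h x).symm

section Plate

variable [Fintype X] [DecidableEq X] {P : Matrix X X ℝ} {Bnd : Finset X}

noncomputable def dirichletData (P : Matrix X X ℝ) (Bnd : Finset X) (g₁ g₂ : X → ℂ) :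
    X → ℂ :=
  fun y => ((∑ z ∈ Bnd, P y z : ℝ) : ℂ)⁻¹ * (∑ z ∈ Bnd, (P y z : ℂ) * g₂ z) - g₁ y

theorem normalDeriv_eq_iff (hnonneg : ∀ x y, 0 ≤ P x y) {g₁ g₂ u : X → ℂ}
    (hu : ∀ x ∈ Bnd, u x = g₂ x) {y : X} (hy : y ∈ bY P Bnd) :
    ((∑ z ∈ Bnd, P y z : ℝ) : ℂ)⁻¹ * ∑ z ∈ Bnd, (P y z : ℂ) * (u z - u y) = g₁ y ↔
      u y = dirichletData P Bnd g₁ g₂ y := by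
  obtain ⟨-, z, hz, hpos⟩ := mem_filter.1 hy
  have hs : ((∑ z ∈ Bnd, P y z : ℝ) : ℂ) ≠ 0 :=
    Complex.ofReal_ne_zero.2 (sum_pos' (fun z _ => hnonneg y z) ⟨z, hz, hpos⟩).ne'
  have hsum : ∑ z ∈ Bnd, (P y z : ℂ) * (u z - u y) =
      ∑ z ∈ Bnd, (P y z : ℂ) * g₂ z - ((∑ z ∈ Bnd, P y z : ℝ) : ℂ) * u y := by
    rw [Complex.ofReal_sum, sum_mul, ← sum_sub_distrib]
    exact sum_congr rfl fun z hz => by rw [hu z hz, mul_sub]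
  rw [hsum, mul_sub, inv_mul_cancel_left₀ hs, dirichletData]
  constructor <;> intro h <;> linear_combination -h

theorem plateSolves_iff (hnonneg : ∀ x y, 0 ≤ P x y) {f g₁ g₂ u : X → ℂ} :
    PlateSolves P Bnd f g₁ g₂ u ↔
      (∀ x ∈ Bnd, u x = g₂ x) ∧
        BiDirSolves P Bnd f (dirichletData P Bnd g₁ g₂) fun z => u z := by
  constructor
  · rintro ⟨hint, hnormal, hbd⟩
    exact ⟨hbd, hint, fun y hy => (normalDeriv_eq_iff hnonneg hbd hy).1 (hnormal y hy)⟩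
  · rintro ⟨hbd, hint, hdir⟩
    exact ⟨hint, fun y hy =>
      (normalDeriv_eq_iff hnonneg hbd hy).2 (hdir ⟨y, (mem_filter.1 hy).1⟩ hy), hbd⟩

end Plate

theorem plate_equation_variant2_general [Fintype X] [DecidableEq X]
    (P : Matrix X X ℝ)
    (hnonneg : ∀ x y, 0 ≤ P x y)
    (hrow : ∀ x, ∑ y, P x y = 1)
    (hirr : ∀ x y, ∃ n, 1 ≤ n ∧ 0 < (P ^ n) x y)
    (Bnd : Finset X) (hB : Bnd.Nonempty) (hB' : Bnd ≠ Finset.univ)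
    (hirrY : ∀ x y : ↥Bndᶜ, ∃ n, 1 ≤ n ∧ 0 < ((PY P Bnd) ^ n) x y)
    (hR : IsUnit (1 + RY P Bnd))
    (f g₁ g₂ : X → ℂ) :
    (∃! u : X → ℂ, PlateSolves P Bnd f g₁ g₂ u) ∧
    (∀ u : X → ℂ, PlateSolves P Bnd f g₁ g₂ u →
      (∀ y ∈ bY P Bnd,
        u y = ((∑ z ∈ Bnd, P y z : ℝ) : ℂ)⁻¹ * (∑ z ∈ Bnd, (P y z : ℂ) * g₂ z) - g₁ y) ∧
      (∀ w : ↥Bndᶜ → ℂ,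
        BiDirSolves P Bnd f
          (fun y => ((∑ z ∈ Bnd, P y z : ℝ) : ℂ)⁻¹ *
            (∑ z ∈ Bnd, (P y z : ℂ) * g₂ z) - g₁ y) w →
        w = fun y : ↥Bndᶜ => u y.1)) := by
  have hA := isUnit_one_sub_subMatrix_Yint hnonneg hrow (bY_nonempty hnonneg hirr hB hB') hirrY
  obtain ⟨w₀, hw₀, huniq⟩ :=
    existsUnique_biDirSolves hnonneg hrow (isUnit_biLapBlock hA hR) f (dirichletData P Bnd g₁ g₂)
  refine ⟨(existsUnique_congr fun u => plateSolves_iff hnonneg).2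
    (existsUnique_extend_compl g₂ ⟨w₀, hw₀, huniq⟩), fun u hu => ?_⟩
  obtain ⟨-, hdir⟩ := (plateSolves_iff hnonneg).1 hu
  exact ⟨fun y hy => hdir.2 ⟨y, (mem_filter.1 hy).1⟩ hy,
    fun w hw => (huniq w hw).trans (huniq _ hdir).symm⟩

/-- Discrete plate equation, variant 2: with the second interior and
the modified outer normal derivative `∂*ₙ`, the problem `Δ_{[Y]}²(u_Y) = f` on `Y°`,
`∂*ₙu = g₁` on `∂Y`, `u = g₂` on `∂X` has a unique solution; its restriction to `Y`
is the unique solution of the bi-Laplace Dirichlet problem on `Y` with boundary data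
`g(y) = (1/P(y,∂X)) ∑_{z∈∂X} P(y,z)g₂(z) − g₁(y)`. -/
theorem plate_equation_variant2 [Fintype X] [DecidableEq X]
    (P : Matrix X X ℝ)
    (hcard : 1 < Fintype.card X)
    (hnonneg : ∀ x y, 0 ≤ P x y)
    (hrow : ∀ x, ∑ y, P x y = 1)
    (hirr : ∀ x y, ∃ n, 1 ≤ n ∧ 0 < (P ^ n) x y)
    (Bnd : Finset X) (hB : Bnd.Nonempty) (hB' : Bnd ≠ Finset.univ)
    (hcardY : 1 < Bndᶜ.card)
    (hYo : (Yint P Bnd).Nonempty)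
    (hpos : ∀ x ∈ Bndᶜ, 0 < ∑ w ∈ Bndᶜ, P x w)
    (hirrY : ∀ x y : ↥Bndᶜ, ∃ n, 1 ≤ n ∧ 0 < ((PY P Bnd) ^ n) x y)
    (hR : IsUnit (1 + RY P Bnd))
    (f g₁ g₂ : X → ℂ) :
    (∃! u : X → ℂ, PlateSolves P Bnd f g₁ g₂ u) ∧
    (∀ u : X → ℂ, PlateSolves P Bnd f g₁ g₂ u →
      (∀ y ∈ bY P Bnd,
        u y = ((∑ z ∈ Bnd, P y z : ℝ) : ℂ)⁻¹ * (∑ z ∈ Bnd, (P y z : ℂ) * g₂ z) - g₁ y) ∧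
      (∀ w : ↥Bndᶜ → ℂ,
        BiDirSolves P Bnd f
          (fun y => ((∑ z ∈ Bnd, P y z : ℝ) : ℂ)⁻¹ *
            (∑ z ∈ Bnd, (P y z : ℂ) * g₂ z) - g₁ y) w →
        w = fun y : ↥Bndᶜ => u y.1)) :=
  plate_equation_variant2_general P hnonneg hrow hirr Bnd hB hB' hirrY hR f g₁ g₂
end

section
/- Assume Y° is nonempty. For every f ∈ L(Y°), g₁ ∈ L(∂Y) and g₂ ∈ L(∂X) there exists a unique u ∈ L(X) such that Δ²u = f on Y°, Δu = g₁ on ∂Y, and u = g₂ on ∂X. It is given by u = G_{X°} G_{Y°} f − G_{X°} h₁ + h₂, where h₁ ∈ L(X°) is defined by h₁(y) = ∑_{w∈∂Y} ν^{∂Y}_y(w) g₁(w) for y ∈ Y = X°, h₂ ∈ L(X) by h₂(x) = ∑_{y∈∂X} ν_x(y) g₂(y), and G_{X°}, G_{Y°} are regarded as X×X matrices with zero entries outside X°×X° resp. Y°×Y°. -/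
open Matrix Finset

attribute [local instance] Classical.propDecidable

variable {X : Type*}

/-- The Laplacian `Δu = Pu − u` acting on complex functions. -/
noncomputable def lap [Fintype X] (P : Matrix X X ℝ) (u : X → ℂ) (x : X) : ℂ :=
  (∑ y, (P x y : ℂ) * u y) - u x

/-- `G_A` regarded as an `X × X` matrix with zero entries outside `A × A`. -/
noncomputable def greenExt [DecidableEq X] (P : Matrix X X ℝ) (A : Finset X) :
    Matrix X X ℝ :=
  Matrix.of fun x y =>
    if hx : x ∈ A then (if hy : y ∈ A then green P A ⟨x, hx⟩ ⟨y, hy⟩ else 0) else 0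

/-- A real matrix acting on complex functions. -/
noncomputable def mulVecC {m n : Type*} [Fintype n] (M : Matrix m n ℝ) (f : n → ℂ) (x : m) : ℂ :=
  ∑ y, (M x y : ℂ) * f y

/-- The hitting distributions on the boundary `B` (interior `A`):
`ν_x = (G_A P_{A,B})(x,·)` for `x ∈ A`, and `ν_x = δ_x` for `x ∈ B`. -/
noncomputable def nuGen [DecidableEq X] (P : Matrix X X ℝ) (A B : Finset X)
    (x y : X) : ℝ :=
  if x ∈ B then (if x = y then 1 else 0)
  else if hx : x ∈ A then
    (if y ∈ B then ∑ w : A, green P A ⟨x, hx⟩ w * P w.1 y else 0)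
  else 0

section Aux
variable [Fintype X] [DecidableEq X] {P : Matrix X X ℝ}

lemma powEntry_nonneg (hnonneg : ∀ x y, 0 ≤ P x y) : ∀ n x y, 0 ≤ (P ^ n) x y := by
  intro n
  induction n with
  | zero => intro x y; simp [Matrix.one_apply]; split <;> norm_num
  | succ n ih =>
      intro x y
      rw [pow_succ, Matrix.mul_apply]
      exact Finset.sum_nonneg fun w _ => mul_nonneg (ih x w) (hnonneg w y)

lemma kernel_triv (hnonneg : ∀ x y, 0 ≤ P x y) (hrow : ∀ x, ∑ y, P x y = 1)
    (hirr : ∀ x y, ∃ n, 1 ≤ n ∧ 0 < (P ^ n) x y)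
    (A : Finset X) (hA : ∃ z, z ∉ A)
    (v : A → ℝ) (hv : ∀ x : A, ∑ y : A, P x.1 y.1 * v y = v x) : v = 0 := by
  by_contra hne
  have hex : ∃ a : A, v a ≠ 0 := by
    by_contra h; push_neg at h; exact hne (funext fun a => h a)
  obtain ⟨a₀, ha₀⟩ := hex
  haveI : Nonempty A := ⟨a₀⟩
  obtain ⟨x₀, -, hx₀⟩ := Finset.exists_max_image Finset.univ (fun a : A => |v a|)
    ⟨a₀, Finset.mem_univ _⟩
  set M := |v x₀| with hMdef
  have hMpos : 0 < M := lt_of_lt_of_le (abs_pos.mpr ha₀) (hx₀ a₀ (Finset.mem_univ _))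
  have hM : ∀ a : A, |v a| ≤ M := fun a => hx₀ a (Finset.mem_univ _)
  have step : ∀ x : A, |v x| = M → ∀ z, 0 < P x.1 z →
      ∃ hz : z ∈ A, |v ⟨z, hz⟩| = M := by
    intro x hx z hz
    have hsub : ∑ y : A, P x.1 y.1 = ∑ y ∈ A, P x.1 y :=
      Finset.sum_coe_sort A (fun y => P x.1 y)
    have h1 : ∑ y : A, P x.1 y.1 ≤ 1 := by
      rw [hsub]
      calc ∑ y ∈ A, P x.1 y ≤ ∑ y, P x.1 y :=
            Finset.sum_le_sum_of_subset_of_nonneg (A.subset_univ)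
              (fun i _ _ => hnonneg _ _)
        _ = 1 := hrow _
    have h2 : M ≤ ∑ y : A, P x.1 y.1 * |v y| := by
      calc M = |∑ y : A, P x.1 y.1 * v y| := by rw [hv x, hx]
        _ ≤ ∑ y : A, |P x.1 y.1 * v y| := Finset.abs_sum_le_sum_abs _ _
        _ = ∑ y : A, P x.1 y.1 * |v y| := by
            refine Finset.sum_congr rfl fun y _ => ?_
            rw [abs_mul, abs_of_nonneg (hnonneg _ _)]
    have h3 : ∑ y : A, P x.1 y.1 * |v y| ≤ M * ∑ y : A, P x.1 y.1 := by
      rw [Finset.mul_sum]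
      refine Finset.sum_le_sum fun y _ => ?_
      calc P x.1 y.1 * |v y| ≤ P x.1 y.1 * M :=
            mul_le_mul_of_nonneg_left (hM y) (hnonneg _ _)
        _ = M * P x.1 y.1 := mul_comm _ _
    have hsum1 : ∑ y : A, P x.1 y.1 = 1 := by nlinarith
    have hzA : z ∈ A := by
      by_contra hzA
      have hcompl : ∑ y ∈ Aᶜ, P x.1 y = 0 := by
        have hsplit : ∑ y ∈ A, P x.1 y + ∑ y ∈ Aᶜ, P x.1 y = 1 := by
          rw [Finset.sum_add_sum_compl]; exact hrow _
        rw [hsub] at hsum1; linarith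
      have := (Finset.sum_eq_zero_iff_of_nonneg
        (fun i _ => hnonneg x.1 i)).mp hcompl z (Finset.mem_compl.mpr hzA)
      linarith
    refine ⟨hzA, ?_⟩
    have heq : ∑ y : A, P x.1 y.1 * (M - |v y|) = 0 := by
      have expand : ∑ y : A, P x.1 y.1 * (M - |v y|)
          = M * ∑ y : A, P x.1 y.1 - ∑ y : A, P x.1 y.1 * |v y| := by
        rw [Finset.mul_sum, ← Finset.sum_sub_distrib]
        exact Finset.sum_congr rfl fun y _ => by ring
      rw [expand, hsum1]
      nlinarith
    have hterm := (Finset.sum_eq_zero_iff_of_nonneg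
      (fun y _ => mul_nonneg (hnonneg _ _) (sub_nonneg.mpr (hM y)))).mp heq
      ⟨z, hzA⟩ (Finset.mem_univ _)
    rcases mul_eq_zero.mp hterm with h | h
    · exact absurd h (ne_of_gt hz)
    · linarith [abs_nonneg (v ⟨z, hzA⟩)]
  have prop : ∀ n, ∀ x : A, |v x| = M → ∀ z, 0 < (P ^ n) x.1 z → z ∈ A := by
    intro n
    induction n with
    | zero =>
        intro x hx z hz
        rw [pow_zero, Matrix.one_apply] at hz
        split at hz
        · next h => exact h ▸ x.2
        · norm_num at hz
    | succ n ih =>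
        intro x hx z hz
        rw [pow_succ', Matrix.mul_apply] at hz
        have hexw : ∃ w, 0 < P x.1 w * (P ^ n) w z := by
          by_contra h; push_neg at h
          have : ∑ w, P x.1 w * (P ^ n) w z ≤ 0 :=
            Finset.sum_nonpos fun w _ => h w
          linarith
        obtain ⟨w, hw⟩ := hexw
        have hPxw : 0 < P x.1 w := by
          rcases (hnonneg x.1 w).lt_or_eq with h | h
          · exact h
          · rw [← h, zero_mul] at hw; linarith
        have hPn : 0 < (P ^ n) w z := by
          rcases (powEntry_nonneg hnonneg n w z).lt_or_eq with h | h
          · exact h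
          · rw [← h, mul_zero] at hw; linarith
        obtain ⟨hwA, hwM⟩ := step x hx w hPxw
        exact ih ⟨w, hwA⟩ hwM z hPn
  obtain ⟨z₀, hz₀⟩ := hA
  obtain ⟨n, -, hn⟩ := hirr x₀.1 z₀
  exact hz₀ (prop n x₀ rfl z₀ hn)


lemma isUnit_key (hnonneg : ∀ x y, 0 ≤ P x y) (hrow : ∀ x, ∑ y, P x y = 1)
    (hirr : ∀ x y, ∃ n, 1 ≤ n ∧ 0 < (P ^ n) x y)
    (A : Finset X) (hA : ∃ z, z ∉ A) : IsUnit (1 - subMatrix P A).det := by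
  rw [isUnit_iff_ne_zero]
  intro hdet
  obtain ⟨v, hv0, hv⟩ := Matrix.exists_mulVec_eq_zero_iff.mpr hdet
  apply hv0
  refine kernel_triv hnonneg hrow hirr A hA v fun x => ?_
  have := congrFun hv x
  simp only [Matrix.mulVec, dotProduct, Matrix.sub_apply, Matrix.one_apply,
    subMatrix, Matrix.of_apply, sub_mul, Finset.sum_sub_distrib,
    Pi.zero_apply] at this
  simp only [ite_mul, one_mul, zero_mul, Finset.sum_ite_eq, Finset.mem_univ,
    if_true] at this
  linarith [this]

lemma green_right (h : IsUnit (1 - subMatrix P A).det) :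
    (1 - subMatrix P A) * green P A = 1 := Matrix.mul_nonsing_inv _ h

lemma kernel_trivC (hnonneg : ∀ x y, 0 ≤ P x y) (hrow : ∀ x, ∑ y, P x y = 1)
    (hirr : ∀ x y, ∃ n, 1 ≤ n ∧ 0 < (P ^ n) x y)
    (A : Finset X) (hA : ∃ z, z ∉ A)
    (v : A → ℂ) (hv : ∀ x : A, ∑ y : A, (P x.1 y.1 : ℂ) * v y = v x) : v = 0 := by
  have hre : (fun a : A => (v a).re) = 0 := by
    refine kernel_triv hnonneg hrow hirr A hA _ fun x => ?_
    have := congrArg Complex.re (hv x)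
    rw [Complex.re_sum] at this
    simpa [Complex.re_ofReal_mul] using this
  have him : (fun a : A => (v a).im) = 0 := by
    refine kernel_triv hnonneg hrow hirr A hA _ fun x => ?_
    have := congrArg Complex.im (hv x)
    rw [Complex.im_sum] at this
    simpa [Complex.im_ofReal_mul] using this
  funext a
  have h1 := congrFun hre a
  have h2 := congrFun him a
  simp only [Pi.zero_apply] at h1 h2 ⊢
  exact Complex.ext h1 h2

lemma mulVecC_greenExt_eq_zero {A : Finset X} (r : X → ℂ) {x : X} (hx : x ∉ A) :
    mulVecC (greenExt P A) r x = 0 := by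
  simp [mulVecC, greenExt, hx]

lemma mulVecC_greenExt_eq {A : Finset X} (r : X → ℂ) {x : X} (hx : x ∈ A) :
    mulVecC (greenExt P A) r x = ∑ z : A, ((green P A ⟨x, hx⟩ z : ℝ) : ℂ) * r z.1 := by
  rw [mulVecC]
  rw [show ∑ y, ((greenExt P A x y : ℝ) : ℂ) * r y
      = ∑ y ∈ A, ((greenExt P A x y : ℝ) : ℂ) * r y from
    (Finset.sum_subset (A.subset_univ) (fun y _ hy => by
      simp [greenExt, hy])).symm]
  rw [← Finset.sum_coe_sort A (fun y => ((greenExt P A x y : ℝ) : ℂ) * r y)]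
  refine Finset.sum_congr rfl fun z _ => ?_
  congr 2
  simp [greenExt, hx, z.2]

lemma lap_mulVecC_greenExt (hnonneg : ∀ x y, 0 ≤ P x y) {A : Finset X}
    (hdet : IsUnit (1 - subMatrix P A).det)
    (r : X → ℂ) {x : X} (hx : x ∈ A) :
    lap P (mulVecC (greenExt P A) r) x = - r x := by
  have key : ∀ z : A, ∑ y : A, P x y.1 * green P A y z
      = green P A ⟨x, hx⟩ z - (if (⟨x, hx⟩ : A) = z then 1 else 0) := by
    intro z
    have h1 := green_right (P := P) hdet
    have h2 := congrFun (congrFun h1 ⟨x, hx⟩) z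
    simp only [Matrix.mul_apply, Matrix.sub_apply, Matrix.one_apply,
      subMatrix, Matrix.of_apply, sub_mul, Finset.sum_sub_distrib] at h2
    simp only [ite_mul, one_mul, zero_mul, Finset.sum_ite_eq, Finset.mem_univ,
      if_true] at h2
    by_cases hxz : (⟨x, hx⟩ : A) = z <;> simp [hxz, Matrix.one_apply] at h2 ⊢ <;> linarith [h2]
  have hsumX : ∑ y, (P x y : ℂ) * mulVecC (greenExt P A) r y
      = ∑ y : A, (P x y.1 : ℂ) * ∑ z : A, ((green P A y z : ℝ) : ℂ) * r z.1 := by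
    rw [show (∑ y, (P x y : ℂ) * mulVecC (greenExt P A) r y)
        = ∑ y ∈ A, (P x y : ℂ) * mulVecC (greenExt P A) r y from
      (Finset.sum_subset (A.subset_univ) (fun y _ hy => by
        rw [mulVecC_greenExt_eq_zero r hy, mul_zero])).symm]
    rw [← Finset.sum_coe_sort A (fun y => (P x y : ℂ) * mulVecC (greenExt P A) r y)]
    exact Finset.sum_congr rfl fun y _ => by rw [mulVecC_greenExt_eq r y.2]
  rw [lap, hsumX, mulVecC_greenExt_eq r hx]
  have swap : ∑ y : A, (P x y.1 : ℂ) * ∑ z : A, ((green P A y z : ℝ) : ℂ) * r z.1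
      = ∑ z : A, ((∑ y : A, P x y.1 * green P A y z : ℝ) : ℂ) * r z.1 := by
    simp_rw [Finset.mul_sum]
    rw [Finset.sum_comm]
    refine Finset.sum_congr rfl fun z _ => ?_
    push_cast
    rw [Finset.sum_mul]
    exact Finset.sum_congr rfl fun y _ => by ring
  rw [swap]
  simp_rw [key]
  rw [← Finset.sum_sub_distrib]
  have hterm : ∀ z : A,
      (((green P A ⟨x, hx⟩ z - if (⟨x, hx⟩ : A) = z then 1 else 0 : ℝ)) : ℂ) * r z.1
        - ((green P A ⟨x, hx⟩ z : ℝ) : ℂ) * r z.1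
      = -((if (⟨x, hx⟩ : A) = z then (1 : ℂ) else 0) * r z.1) := by
    intro z; split <;> push_cast <;> ring
  simp_rw [hterm]
  simp [ite_mul, Finset.sum_ite_eq]


lemma lap_comb (a b c : X → ℂ) (x : X) :
    lap P (fun y => a y - b y + c y) x = lap P a x - lap P b x + lap P c x := by
  simp only [lap, mul_sub, mul_add, Finset.sum_add_distrib, Finset.sum_sub_distrib]
  ring

lemma lap_sub (a b : X → ℂ) (x : X) :
    lap P (fun y => a y - b y) x = lap P a x - lap P b x := by
  simp only [lap, mul_sub, Finset.sum_sub_distrib]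
  ring

lemma lap_negadd (a b : X → ℂ) (x : X) :
    lap P (fun y => -a y + b y) x = -lap P a x + lap P b x := by
  simp only [lap, mul_neg, mul_add, Finset.sum_add_distrib, Finset.sum_neg_distrib]
  ring

lemma nu_boundary {A B : Finset X} (g : X → ℂ) {x : X} (hx : x ∈ B) :
    ∑ y ∈ B, (nuGen P A B x y : ℂ) * g y = g x := by
  simp only [nuGen, hx, if_true]
  rw [Finset.sum_congr rfl (fun y (_ : y ∈ B) => by
    split <;> simp : ∀ y ∈ B, ((if x = y then (1:ℝ) else 0 : ℝ) : ℂ) * g y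
      = if x = y then g y else 0)]
  simp [Finset.sum_ite_eq, hx]

lemma nu_decomp {A B : Finset X} (hdisj : ∀ x ∈ B, x ∉ A) (g : X → ℂ) (z : X) :
    ∑ y ∈ B, (nuGen P A B z y : ℂ) * g y
      = mulVecC (greenExt P A) (fun w => ∑ y ∈ B, (P w y : ℂ) * g y) z
        + (if z ∈ B then g z else 0) := by
  by_cases hzB : z ∈ B
  · rw [mulVecC_greenExt_eq_zero _ (hdisj z hzB), nu_boundary g hzB]
    simp [hzB]
  · simp only [hzB, if_false, add_zero]
    by_cases hzA : z ∈ A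
    · rw [mulVecC_greenExt_eq _ hzA]
      have hterm : ∀ y ∈ B, (nuGen P A B z y : ℂ) * g y
          = ∑ w : A, ((green P A ⟨z, hzA⟩ w : ℝ) : ℂ) * ((P w.1 y : ℂ) * g y) := by
        intro y hy
        simp only [nuGen, hzB, if_false, dif_pos hzA, hy, if_true]
        push_cast
        rw [Finset.sum_mul]
        exact Finset.sum_congr rfl fun w _ => by ring
      rw [Finset.sum_congr rfl hterm, Finset.sum_comm]
      exact Finset.sum_congr rfl fun w _ => by rw [Finset.mul_sum]
    · rw [mulVecC_greenExt_eq_zero _ hzA]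
      refine Finset.sum_eq_zero fun y hy => ?_
      simp [nuGen, hzB, hzA]

lemma lap_nu (hnonneg : ∀ x y, 0 ≤ P x y) {A B : Finset X}
    (hdet : IsUnit (1 - subMatrix P A).det)
    (hdisj : ∀ x ∈ B, x ∉ A) (g : X → ℂ) {x : X} (hx : x ∈ A) :
    lap P (fun z => ∑ y ∈ B, (nuGen P A B z y : ℂ) * g y) x = 0 := by
  have hfun : (fun z => ∑ y ∈ B, (nuGen P A B z y : ℂ) * g y)
      = fun z => mulVecC (greenExt P A) (fun w => ∑ y ∈ B, (P w y : ℂ) * g y) z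
          + (if z ∈ B then g z else 0) := funext (nu_decomp hdisj g)
  have hxB : x ∉ B := fun h => hdisj x h hx
  have hsum : ∑ y, (P x y : ℂ) * (if y ∈ B then g y else 0)
      = ∑ y ∈ B, (P x y : ℂ) * g y := by
    rw [← Finset.sum_subset (B.subset_univ) (fun y _ hy => by simp [hy])]
    exact Finset.sum_congr rfl fun y hy => by simp [hy]
  have hlin : lap P (fun z => mulVecC (greenExt P A) (fun w => ∑ y ∈ B, (P w y : ℂ) * g y) z
          + (if z ∈ B then g z else 0)) x
      = lap P (mulVecC (greenExt P A) (fun w => ∑ y ∈ B, (P w y : ℂ) * g y)) x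
        + lap P (fun z => if z ∈ B then g z else 0) x := by
    simp only [lap, mul_add, Finset.sum_add_distrib]
    ring
  rw [hfun, hlin, lap_mulVecC_greenExt hnonneg hdet _ hx]
  have he : lap P (fun z => if z ∈ B then g z else 0) x
      = ∑ y ∈ B, (P x y : ℂ) * g y := by
    simp only [lap, hxB, if_false, sub_zero, hsum]
  rw [he]
  ring

end Aux

/-- The solution formula. -/
noncomputable def Usol [Fintype X] [DecidableEq X] (P : Matrix X X ℝ) (Bnd : Finset X)
    (f g₁ g₂ : X → ℂ) : X → ℂ :=
  fun x =>
    mulVecC (greenExt P Bndᶜ) (mulVecC (greenExt P (Yint P Bnd)) f) x -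
      mulVecC (greenExt P Bndᶜ)
        (fun z => ∑ w ∈ bY P Bnd, (nuGen P (Yint P Bnd) (bY P Bnd) z w : ℂ) * g₁ w) x +
      ∑ y ∈ Bnd, (nuGen P Bndᶜ Bnd x y : ℂ) * g₂ y

section Main
variable [Fintype X] [DecidableEq X] {P : Matrix X X ℝ}

lemma mem_facts (hnonneg : ∀ x y, 0 ≤ P x y) {Bnd : Finset X} :
    (∀ z ∈ Yint P Bnd, z ∉ Bnd) ∧ (∀ z ∈ bY P Bnd, z ∉ Bnd) ∧
    (∀ z ∈ bY P Bnd, z ∉ Yint P Bnd) ∧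
    (∀ z ∈ Yint P Bnd, ∀ y ∈ Bnd, P z y = 0) ∧
    (∀ y, y ∉ Yint P Bnd → y ∉ Bnd → y ∈ bY P Bnd) := by
  refine ⟨?_, ?_, ?_, ?_, ?_⟩
  · intro z hz
    rw [Yint, Finset.mem_sdiff, Finset.mem_compl] at hz
    exact hz.1
  · intro z hz
    rw [bY, Finset.mem_filter, Finset.mem_compl] at hz
    exact hz.1
  · intro z hz
    rw [Yint, Finset.mem_sdiff]
    intro h
    exact h.2 hz
  · intro z hz y hy
    rw [Yint, Finset.mem_sdiff, bY, Finset.mem_filter] at hz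
    obtain ⟨h1, h2⟩ := hz
    push_neg at h2
    exact le_antisymm (h2 h1 y hy) (hnonneg z y)
  · intro y h1 h2
    by_contra h3
    exact h1 (by rw [Yint, Finset.mem_sdiff, Finset.mem_compl]; exact ⟨h2, h3⟩)

lemma Usol_sol (hnonneg : ∀ x y, 0 ≤ P x y) (hrow : ∀ x, ∑ y, P x y = 1)
    (hirr : ∀ x y, ∃ n, 1 ≤ n ∧ 0 < (P ^ n) x y)
    {Bnd : Finset X} (hB : Bnd.Nonempty)
    (f g₁ g₂ : X → ℂ) :
    (∀ x ∈ Yint P Bnd, lap P (lap P (Usol P Bnd f g₁ g₂)) x = f x) ∧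
      (∀ y ∈ bY P Bnd, lap P (Usol P Bnd f g₁ g₂) y = g₁ y) ∧
      (∀ x ∈ Bnd, Usol P Bnd f g₁ g₂ x = g₂ x) := by
  obtain ⟨b₀, hb₀⟩ := hB
  obtain ⟨hYB, hbYB, hbYY, hP0, hcover⟩ := mem_facts (P := P) hnonneg (Bnd := Bnd)
  have hAc : ∃ z, z ∉ Bndᶜ := ⟨b₀, by simp [hb₀]⟩
  have hYc : ∃ z, z ∉ Yint P Bnd := ⟨b₀, fun h => hYB b₀ h hb₀⟩
  have hdetA := isUnit_key hnonneg hrow hirr Bndᶜ hAc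
  have hdetY := isUnit_key hnonneg hrow hirr (Yint P Bnd) hYc
  have hdisj2 : ∀ x ∈ Bnd, x ∉ Bndᶜ := fun x hx => by simp [hx]
  -- abbreviations
  set q : X → ℂ := mulVecC (greenExt P (Yint P Bnd)) f with hq
  set H₁ : X → ℂ :=
    fun z => ∑ w ∈ bY P Bnd, (nuGen P (Yint P Bnd) (bY P Bnd) z w : ℂ) * g₁ w with hH₁
  set H₂ : X → ℂ := fun x => ∑ y ∈ Bnd, (nuGen P Bndᶜ Bnd x y : ℂ) * g₂ y with hH₂
  have hUeq : ∀ x, Usol P Bnd f g₁ g₂ x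
      = mulVecC (greenExt P Bndᶜ) q x - mulVecC (greenExt P Bndᶜ) H₁ x + H₂ x :=
    fun x => rfl
  have lapA : ∀ x ∈ Bndᶜ, lap P (Usol P Bnd f g₁ g₂) x = - q x + H₁ x := by
    intro x hx
    have hlin : lap P (Usol P Bnd f g₁ g₂) x
        = lap P (mulVecC (greenExt P Bndᶜ) q) x
          - lap P (mulVecC (greenExt P Bndᶜ) H₁) x + lap P H₂ x :=
      lap_comb (mulVecC (greenExt P Bndᶜ) q) (mulVecC (greenExt P Bndᶜ) H₁) H₂ x
    rw [hlin, lap_mulVecC_greenExt hnonneg hdetA q hx,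
      lap_mulVecC_greenExt hnonneg hdetA H₁ hx, hH₂,
      lap_nu hnonneg hdetA hdisj2 g₂ hx]
    ring
  refine ⟨?_, ?_, ?_⟩
  · -- Δ²u = f on Y°
    intro z hz
    have hzA : z ∈ Bndᶜ := Finset.mem_compl.mpr (hYB z hz)
    have hstep : ∀ y, (P z y : ℂ) * lap P (Usol P Bnd f g₁ g₂) y
        = (P z y : ℂ) * (- q y + H₁ y) := by
      intro y
      by_cases hy : y ∈ Bnd
      · rw [hP0 z hz y hy]; push_cast; ring
      · rw [lapA y (Finset.mem_compl.mpr hy)]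
    have h1 : lap P (lap P (Usol P Bnd f g₁ g₂)) z
        = (∑ y, (P z y : ℂ) * lap P (Usol P Bnd f g₁ g₂) y)
          - lap P (Usol P Bnd f g₁ g₂) z := rfl
    rw [h1, Finset.sum_congr rfl (fun y _ => hstep y), lapA z hzA]
    have h2 : (∑ y, (P z y : ℂ) * (- q y + H₁ y)) - (- q z + H₁ z)
        = lap P (fun y => - q y + H₁ y) z := rfl
    rw [h2, lap_negadd q H₁ z, hq, lap_mulVecC_greenExt hnonneg hdetY f hz, hH₁,
      lap_nu hnonneg hdetY hbYY g₁ hz]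
    ring
  · -- Δu = g₁ on ∂Y
    intro y hy
    have hyA : y ∈ Bndᶜ := Finset.mem_compl.mpr (hbYB y hy)
    rw [lapA y hyA, hq, mulVecC_greenExt_eq_zero f (hbYY y hy)]
    simp only [hH₁]
    rw [nu_boundary g₁ hy]
    ring
  · -- u = g₂ on ∂X
    intro x hx
    have hxA : x ∉ Bndᶜ := hdisj2 x hx
    rw [hUeq x, mulVecC_greenExt_eq_zero q hxA, mulVecC_greenExt_eq_zero H₁ hxA]
    simp only [hH₂]
    rw [nu_boundary g₂ hx]
    ring

lemma dirichlet_uniq (hnonneg : ∀ x y, 0 ≤ P x y) (hrow : ∀ x, ∑ y, P x y = 1)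
    (hirr : ∀ x y, ∃ n, 1 ≤ n ∧ 0 < (P ^ n) x y)
    {Bnd : Finset X} (hB : Bnd.Nonempty)
    (f g₁ g₂ : X → ℂ) (u u' : X → ℂ)
    (hu : (∀ x ∈ Yint P Bnd, lap P (lap P u) x = f x) ∧
      (∀ y ∈ bY P Bnd, lap P u y = g₁ y) ∧ (∀ x ∈ Bnd, u x = g₂ x))
    (hu' : (∀ x ∈ Yint P Bnd, lap P (lap P u') x = f x) ∧
      (∀ y ∈ bY P Bnd, lap P u' y = g₁ y) ∧ (∀ x ∈ Bnd, u' x = g₂ x)) :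
    u = u' := by
  obtain ⟨hu1, hu2, hu3⟩ := hu
  obtain ⟨hv1, hv2, hv3⟩ := hu'
  obtain ⟨b₀, hb₀⟩ := hB
  obtain ⟨hYB, hbYB, hbYY, hP0, hcover⟩ := mem_facts (P := P) hnonneg (Bnd := Bnd)
  have hAc : ∃ z, z ∉ Bndᶜ := ⟨b₀, by simp [hb₀]⟩
  have hYc : ∃ z, z ∉ Yint P Bnd := ⟨b₀, fun h => hYB b₀ h hb₀⟩
  set d : X → ℂ := fun x => u x - u' x with hd
  have hd3 : ∀ x ∈ Bnd, d x = 0 := fun x hx => by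
    rw [hd]; simp [hu3 x hx, hv3 x hx]
  have hlapd : ∀ x, lap P d x = lap P u x - lap P u' x := fun x => lap_sub u u' x
  have hd2 : ∀ y ∈ bY P Bnd, lap P d y = 0 := fun y hy => by
    rw [hlapd, hu2 y hy, hv2 y hy, sub_self]
  have hd1 : ∀ z ∈ Yint P Bnd, lap P (lap P d) z = 0 := by
    intro z hz
    have heq : lap P (lap P d) z = lap P (fun y => lap P u y - lap P u' y) z := by
      congr 1
      funext y
      exact hlapd y
    rw [heq, lap_sub (lap P u) (lap P u') z, hu1 z hz, hv1 z hz, sub_self]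
  have hvY : ∀ z ∈ Yint P Bnd, lap P d z = 0 := by
    have hker : (fun z : (Yint P Bnd : Finset X) => lap P d z.1) = 0 := by
      refine kernel_trivC hnonneg hrow hirr _ hYc _ fun x => ?_
      have h0 : (∑ y, (P x.1 y : ℂ) * lap P d y) - lap P d x.1 = 0 := hd1 x.1 x.2
      have hX : ∑ y, (P x.1 y : ℂ) * lap P d y = lap P d x.1 := sub_eq_zero.mp h0
      rw [← hX, Finset.sum_coe_sort (Yint P Bnd)
        (fun y => (P x.1 y : ℂ) * lap P d y)]
      refine Finset.sum_subset (Finset.subset_univ _) fun y _ hy => ?_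
      by_cases hyB : y ∈ Bnd
      · rw [hP0 x.1 x.2 y hyB]; push_cast; ring
      · rw [hd2 y (hcover y hy hyB), mul_zero]
    intro z hz
    exact congrFun hker ⟨z, hz⟩
  have hvAll : ∀ z, z ∉ Bnd → lap P d z = 0 := by
    intro z hz
    by_cases h : z ∈ Yint P Bnd
    · exact hvY z h
    · exact hd2 z (hcover z h hz)
  have hdA : (fun z : (Bndᶜ : Finset X) => d z.1) = 0 := by
    refine kernel_trivC hnonneg hrow hirr _ hAc _ fun x => ?_
    have h0 : (∑ y, (P x.1 y : ℂ) * d y) - d x.1 = 0 :=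
      hvAll x.1 (Finset.mem_compl.mp x.2)
    have hX : ∑ y, (P x.1 y : ℂ) * d y = d x.1 := sub_eq_zero.mp h0
    rw [← hX, Finset.sum_coe_sort Bndᶜ (fun y => (P x.1 y : ℂ) * d y)]
    refine Finset.sum_subset (Finset.subset_univ _) fun y _ hy => ?_
    rw [hd3 y (by simpa using hy), mul_zero]
  funext x
  have hdx : d x = 0 := by
    by_cases hx : x ∈ Bnd
    · exact hd3 x hx
    · exact congrFun hdA ⟨x, Finset.mem_compl.mpr hx⟩
  rw [hd] at hdx
  simpa [sub_eq_zero] using hdx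

end Main

/-- The iterated Dirichlet problem: `Δ²u = f` on `Y°`, `Δu = g₁` on
`∂Y`, `u = g₂` on `∂X` has a unique solution, namely
`u = G_{X°} G_{Y°} f − G_{X°} h₁ + h₂` with `h₁(y) = ∫_{∂Y} g₁ dν^{∂Y}_y` and
`h₂(x) = ∫_{∂X} g₂ dν_x`. -/
theorem iterated_dirichlet_problem [Fintype X] [DecidableEq X]
    (P : Matrix X X ℝ)
    (hcard : 1 < Fintype.card X)
    (hnonneg : ∀ x y, 0 ≤ P x y)
    (hrow : ∀ x, ∑ y, P x y = 1)
    (hirr : ∀ x y, ∃ n, 1 ≤ n ∧ 0 < (P ^ n) x y)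
    (Bnd : Finset X) (hB : Bnd.Nonempty) (hB' : Bnd ≠ Finset.univ)
    (hYo : (Yint P Bnd).Nonempty)
    (f g₁ g₂ : X → ℂ) :
    (∃! u : X → ℂ,
      (∀ x ∈ Yint P Bnd, lap P (lap P u) x = f x) ∧
        (∀ y ∈ bY P Bnd, lap P u y = g₁ y) ∧ (∀ x ∈ Bnd, u x = g₂ x)) ∧
    (∀ u : X → ℂ,
      ((∀ x ∈ Yint P Bnd, lap P (lap P u) x = f x) ∧
        (∀ y ∈ bY P Bnd, lap P u y = g₁ y) ∧ (∀ x ∈ Bnd, u x = g₂ x)) →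
      ∀ x, u x =
        mulVecC (greenExt P Bndᶜ) (mulVecC (greenExt P (Yint P Bnd)) f) x -
          mulVecC (greenExt P Bndᶜ)
            (fun z => ∑ w ∈ bY P Bnd, (nuGen P (Yint P Bnd) (bY P Bnd) z w : ℂ) * g₁ w) x +
          ∑ y ∈ Bnd, (nuGen P Bndᶜ Bnd x y : ℂ) * g₂ y) := by
  have hsol := Usol_sol hnonneg hrow hirr hB f g₁ g₂
  refine ⟨⟨Usol P Bnd f g₁ g₂, hsol, fun u hu =>
      dirichlet_uniq hnonneg hrow hirr hB f g₁ g₂ u (Usol P Bnd f g₁ g₂) hu hsol⟩,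
    fun u hu x => ?_⟩
  have h := dirichlet_uniq hnonneg hrow hirr hB f g₁ g₂ u (Usol P Bnd f g₁ g₂) hu hsol
  exact congrFun h x
end
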